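/- For vertices i ≠ j and weight w_{ij} > 0, the base polytope of the submodular function F_{ij} (where F_{ij}(S) = -w_{ij} if i,j ∈ S and 0 otherwise) equals the set -w_{ij}·conv(e_i, e_j), the scaled convex hull of the two canonical basis vectors; equivalently, B_{F_{ij}} = {g ∈ ℝ^n : g_i ≤ 0, g_j ≤ 0, g_i + g_j = -w_{ij}, g_k = 0 for k ≠ i,j}. -/

import Mathlib

/-!
A vector `g` in the base polytope of `F` satisfies
`F univ - F (univ \ {k}) ≤ g k ≤ F {k}` for every coordinate `k`. For the edge function these
bounds force `g k = 0` off `{i, j}` and `g i, g j ≤ 0`, while `g i + g j = F univ = -w`; conversely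
such a `g` meets every constraint, since `∑ k ∈ S, g k` only sees the part of `S` inside `{i, j}`.
Dividing by `-w`, the nonpositive vectors supported on `{i, j}` with `g i + g j = -w` are exactly
the convex combinations of `e_i` and `e_j`, scaled by `-w`.
-/

open Finset

variable {ι : Type*}

def basePolytope [Fintype ι] (F : Finset ι → ℝ) : Set (ι → ℝ) :=
  {g | ∑ k, g k = F univ ∧ ∀ S : Finset ι, ∑ k ∈ S, g k ≤ F S}

def edgeFunction [DecidableEq ι] (i j : ι) (w : ℝ) (S : Finset ι) : ℝ :=
  if i ∈ S ∧ j ∈ S then -w else 0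

namespace basePolytope

variable [Fintype ι] {F : Finset ι → ℝ} {g : ι → ℝ}

theorem apply_le (hg : g ∈ basePolytope F) (k : ι) : g k ≤ F {k} := by
  simpa using hg.2 {k}

theorem sub_erase_le_apply [DecidableEq ι] (hg : g ∈ basePolytope F) (k : ι) :
    F univ - F (univ.erase k) ≤ g k := by
  have hsplit : g k + ∑ m ∈ univ.erase k, g m = F univ := by
    rw [add_sum_erase _ _ (mem_univ k), hg.1]
  linarith [hg.2 (univ.erase k)]

end basePolytope

theorem eq_single_add_single_of_apply_eq_zero [DecidableEq ι] {i j : ι} (hij : i ≠ j) {g : ι → ℝ}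
    (hg : ∀ k, k ≠ i → k ≠ j → g k = 0) : g = Pi.single i (g i) + Pi.single j (g j) := by
  funext k
  by_cases hki : k = i
  · subst hki
    simp [Pi.single_eq_of_ne hij]
  by_cases hkj : k = j
  · subst hkj
    simp [Pi.single_eq_of_ne hij.symm]
  simp [Pi.single_eq_of_ne hki, Pi.single_eq_of_ne hkj, hg k hki hkj]

theorem basePolytope_edgeFunction [Fintype ι] [DecidableEq ι] {i j : ι} (hij : i ≠ j) (w : ℝ) :
    basePolytope (edgeFunction i j w) =
      {g | g i ≤ 0 ∧ g j ≤ 0 ∧ g i + g j = -w ∧ ∀ k, k ≠ i → k ≠ j → g k = 0} := by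
  have hsingleton (k : ι) : edgeFunction i j w {k} = 0 := by
    simp only [edgeFunction, mem_singleton, ite_eq_right_iff, and_imp]
    rintro rfl rfl
    exact absurd rfl hij
  have huniv : edgeFunction i j w univ = -w := by simp [edgeFunction]
  ext g
  constructor
  · intro hg
    have hi := hsingleton i ▸ basePolytope.apply_le hg i
    have hj := hsingleton j ▸ basePolytope.apply_le hg j
    have hzero (k : ι) (hki : k ≠ i) (hkj : k ≠ j) : g k = 0 := by
      have herase : edgeFunction i j w (univ.erase k) = -w := by
        simp [edgeFunction, Ne.symm hki, Ne.symm hkj]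
      have hlower := basePolytope.sub_erase_le_apply hg k
      rw [huniv, herase, sub_self] at hlower
      linarith [hsingleton k ▸ basePolytope.apply_le hg k]
    have hsum := hg.1
    rw [eq_single_add_single_of_apply_eq_zero hij hzero] at hsum
    simp only [Pi.add_apply, sum_add_distrib, sum_pi_single', mem_univ, if_true, huniv] at hsum
    exact ⟨hi, hj, by simpa using hsum, hzero⟩
  · rintro ⟨hi, hj, hsum, hzero⟩
    have hsum_eq (S : Finset ι) :
        ∑ k ∈ S, g k = (if i ∈ S then g i else 0) + (if j ∈ S then g j else 0) := by
      conv_lhs => rw [eq_single_add_single_of_apply_eq_zero hij hzero]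
      simp only [Pi.add_apply, sum_add_distrib, sum_pi_single']
    refine ⟨by simp [hsum_eq, huniv, hsum], fun S => ?_⟩
    rw [hsum_eq, edgeFunction]
    split_ifs <;> simp_all

theorem image_neg_smul_convexHull_pair_single [DecidableEq ι] {i j : ι} (hij : i ≠ j) {w : ℝ}
    (hw : 0 < w) :
    (fun g => (-w) • g) '' convexHull ℝ {Pi.single i (1 : ℝ), Pi.single j (1 : ℝ)} =
      {g : ι → ℝ | g i ≤ 0 ∧ g j ≤ 0 ∧ g i + g j = -w ∧ ∀ k, k ≠ i → k ≠ j → g k = 0} := by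
  rw [convexHull_pair]
  ext g
  constructor
  · rintro ⟨_, ⟨a, b, ha, hb, hab, rfl⟩, rfl⟩
    simp only [Set.mem_ofPred_eq, Pi.smul_apply, Pi.add_apply, smul_eq_mul, Pi.single_apply,
      hij, hij.symm, if_true, if_false]
    refine ⟨by nlinarith, by nlinarith, by linear_combination (-w) * hab, fun k hki hkj => ?_⟩
    simp [hki, hkj]
  · rintro ⟨hi, hj, hsum, hzero⟩
    refine ⟨_, ⟨-g i / w, -g j / w, div_nonneg (by linarith) hw.le,
      div_nonneg (by linarith) hw.le, ?_, rfl⟩, ?_⟩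
    · field_simp
      linarith
    · conv_rhs => rw [eq_single_add_single_of_apply_eq_zero hij hzero]
      dsimp only
      rw [smul_add, smul_smul, smul_smul, ← Pi.single_smul', ← Pi.single_smul']
      field_simp
      simp

theorem base_polytope_of_edge_function (n : ℕ) (i j : Fin n) (hij : i ≠ j)
    (w : ℝ) (hw : 0 < w) (F : Finset (Fin n) → ℝ)
    (hF : ∀ S : Finset (Fin n), F S = if i ∈ S ∧ j ∈ S then -w else 0) :
    {g : Fin n → ℝ | (∑ k, g k) = F Finset.univ ∧
        ∀ S : Finset (Fin n), (∑ k ∈ S, g k) ≤ F S} =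
      {g : Fin n → ℝ | g i ≤ 0 ∧ g j ≤ 0 ∧ g i + g j = -w ∧
        ∀ k, k ≠ i → k ≠ j → g k = 0} ∧
    {g : Fin n → ℝ | (∑ k, g k) = F Finset.univ ∧
        ∀ S : Finset (Fin n), (∑ k ∈ S, g k) ≤ F S} =
      (fun g => (-w) • g) '' convexHull ℝ
        {Pi.single i (1 : ℝ), Pi.single j (1 : ℝ)} := by
  obtain rfl : F = edgeFunction i j w := funext hF
  have hB : basePolytope (edgeFunction i j w) = _ := basePolytope_edgeFunction hij w
  exact ⟨hB, hB.trans (image_neg_smul_convexHull_pair_single hij hw).symm⟩
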